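/- arXiv:1804.08168 — 2 statements merged into one kernel-verified Lean document; each statement's English description precedes it below -/
import Mathlib

section
/- Fix an integer N ≥ 2, a constant T_s > 0, strictly positive reals r_1, …, r_N and reals θ_1, …, θ_N with Σ_{1≤j<k≤N} sin²(θ_j − θ_k) > 0. Let r_min = min_k r_k and r_max = max_k r_k. Then N·r_min² / (T_s Σ_{1≤j<k≤N} sin²(θ_j − θ_k)) ≤ S(r,θ) ≤ N·r_max² / (T_s Σ_{1≤j<k≤N} sin²(θ_j − θ_k)), where S(r,θ) = (Σ_{k=1}^N r_k^{-2}) / (T_s Σ_{1≤j<k≤N} r_j^{-2} r_k^{-2} sin²(θ_j − θ_k)). -/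
/-!
With weights `w k = (r k ^ 2)⁻¹`, the SPEB is `tr (J w)⁻¹ / T_s` for the `2 × 2` Fisher
information `J w = ∑ k, w k • u(θ k) u(θ k)ᵀ`, `u φ = (cos φ, sin φ)`: its trace is `∑ k, w k`
and, by Lagrange's identity, its determinant is `∑_{j<k} w j * w k * sin² (θ j - θ k)`.
`J` is monotone in `w` for the Loewner order and `A ↦ tr A⁻¹` is antitone on positive definite
matrices, so `r_max⁻² ≤ w k ≤ r_min⁻²` sandwiches the SPEB between its values at the common
distances `r_max` and `r_min`, which are the GDOP values.
-/

open Finset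

/-- The SPEB of `N` anchors at distances `r_k > 0` and angles `θ_k`:
`S(r,θ) = (Σ_k r_k^{-2}) / (T_s Σ_{j<k} r_j^{-2} r_k^{-2} sin²(θ_j − θ_k))`. -/
noncomputable def SPEB (N : ℕ) (Ts : ℝ) (r θ : Fin N → ℝ) : ℝ :=
  (∑ k, ((r k) ^ 2)⁻¹) /
    (Ts * ∑ j, ∑ k ∈ Finset.univ.filter (fun k => j < k),
      ((r j) ^ 2)⁻¹ * ((r k) ^ 2)⁻¹ * Real.sin (θ j - θ k) ^ 2)

open Matrix Real

theorem Finset.sum_sum_eq_two_nsmul_sum_sum_filter_lt {ι M : Type*} [Fintype ι] [LinearOrder ι]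
    [AddCommMonoid M] (f : ι → ι → M) (hsymm : ∀ j k, f j k = f k j) (hdiag : ∀ j, f j j = 0) :
    ∑ j, ∑ k, f j k = 2 • ∑ j, ∑ k ∈ univ.filter (fun k => j < k), f j k := by
  have hsplit j k : f j k = (if j < k then f j k else 0) + (if k < j then f k j else 0) := by
    rcases lt_trichotomy j k with h | rfl | h
    · simp [h, h.not_gt]
    · simp [hdiag]
    · simp [h, h.not_gt, hsymm j k]
  simp_rw [sum_filter]
  rw [two_nsmul]
  conv_lhs => enter [2, j, 2, k]; rw [hsplit j k]
  simp only [sum_add_distrib]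
  rw [sum_comm (f := fun j k => if k < j then f k j else 0)]

theorem Matrix.trace_inv_fin_two {K : Type*} [Field K] (A : Matrix (Fin 2) (Fin 2) K) :
    A⁻¹.trace = A.trace / A.det := by
  rw [inv_def, adjugate_fin_two, trace_smul, trace_fin_two, trace_fin_two, Ring.inverse_eq_inv']
  simp [div_eq_inv_mul, add_comm]

theorem Matrix.trace_inv_le_of_posSemidef_sub_fin_two {A B : Matrix (Fin 2) (Fin 2) ℝ}
    (hA : A.PosDef) (hAB : (B - A).PosSemidef) : B⁻¹.trace ≤ A⁻¹.trace := by
  obtain ⟨C, rfl⟩ : ∃ C, B = A + C := ⟨B - A, by abel⟩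
  rw [add_sub_cancel_left] at hAB
  rw [trace_inv_fin_two, trace_inv_fin_two,
    div_le_div_iff₀ (hA.add_posSemidef hAB).det_pos hA.det_pos]
  have hA_symm : A 1 0 = A 0 1 := by simpa using hA.isHermitian.apply 0 1
  have hC_symm : C 1 0 = C 0 1 := by simpa using hAB.isHermitian.apply 0 1
  have hdet := mul_nonneg hA.posSemidef.trace_nonneg hAB.det_nonneg
  have hq₁ := hAB.dotProduct_mulVec_nonneg ![A 0 1, -A 0 0]
  have hq₂ := hAB.dotProduct_mulVec_nonneg ![A 1 1, -A 0 1]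
  simp only [dotProduct, Pi.star_apply, star_trivial, mulVec, Fin.sum_univ_two, cons_val_zero,
    cons_val_one, cons_val_fin_one] at hq₁ hq₂
  simp only [trace_fin_two, det_fin_two, add_apply] at hdet ⊢
  rw [hA_symm, hC_symm] at *
  -- `tr A · det (A + C) - tr (A + C) · det A = tr A · det C + q (A₀₁, -A₀₀) + q (A₁₁, -A₀₁)`,
  -- where `q` is the quadratic form of `C`.
  linear_combination hdet + hq₁ + hq₂

section fisherInfo

variable {ι : Type*} [Fintype ι] (θ : ι → ℝ)

noncomputable def fisherInfo (w : ι → ℝ) : Matrix (Fin 2) (Fin 2) ℝ :=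
  ∑ k, w k • vecMulVec ![cos (θ k), sin (θ k)] ![cos (θ k), sin (θ k)]

theorem fisherInfo_sub (v w : ι → ℝ) :
    fisherInfo θ w - fisherInfo θ v = fisherInfo θ (w - v) := by
  simp only [fisherInfo, ← sum_sub_distrib, Pi.sub_apply, sub_smul]

theorem fisherInfo_posSemidef {w : ι → ℝ} (hw : ∀ k, 0 ≤ w k) : (fisherInfo θ w).PosSemidef :=
  posSemidef_sum _ fun k _ => (posSemidef_vecMulVec_self_star _).smul (hw k)

theorem trace_fisherInfo (w : ι → ℝ) : (fisherInfo θ w).trace = ∑ k, w k := by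
  simp only [fisherInfo, trace_sum, trace_smul, trace_fin_two, vecMulVec_apply]
  refine sum_congr rfl fun k _ => ?_
  simp only [cons_val_zero, cons_val_one, smul_eq_mul]
  linear_combination w k * cos_sq_add_sin_sq (θ k)

theorem det_fisherInfo [LinearOrder ι] (w : ι → ℝ) :
    (fisherInfo θ w).det =
      ∑ j, ∑ k ∈ univ.filter (fun k => j < k), w j * w k * sin (θ j - θ k) ^ 2 := by
  set g : ι → ι → ℝ := fun j k =>
    w j * w k * (cos (θ j) ^ 2 * sin (θ k) ^ 2 - cos (θ j) * sin (θ j) * (cos (θ k) * sin (θ k)))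
  have hdet : (fisherInfo θ w).det = ∑ j, ∑ k, g j k := by
    simp only [det_fin_two, fisherInfo, Matrix.sum_apply, Matrix.smul_apply, vecMulVec_apply,
      cons_val_zero, cons_val_one, smul_eq_mul, sum_mul_sum, ← sum_sub_distrib]
    refine sum_congr rfl fun j _ => sum_congr rfl fun k _ => ?_
    ring
  have hg j k : g j k + g k j = w j * w k * sin (θ j - θ k) ^ 2 := by
    simp only [g, sin_sub]
    ring
  have hsymm := sum_sum_eq_two_nsmul_sum_sum_filter_lt
    (fun j k => w j * w k * sin (θ j - θ k) ^ 2) (fun j k => by rw [← hg, add_comm, hg])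
    (fun j => by simp)
  calc (fisherInfo θ w).det = (∑ j, ∑ k, g j k + ∑ j, ∑ k, g k j) / 2 := by
        rw [sum_comm (f := fun j k => g k j), hdet]; ring
    _ = _ := by
        simp only [← sum_add_distrib, hg]
        rw [hsymm, two_nsmul]; ring

theorem fisherInfo_posDef_of_le {v w : ι → ℝ} (hvw : ∀ k, v k ≤ w k)
    (hv : (fisherInfo θ v).PosDef) : (fisherInfo θ w).PosDef := by
  rw [← add_sub_cancel (fisherInfo θ v) (fisherInfo θ w), fisherInfo_sub]
  exact hv.add_posSemidef (fisherInfo_posSemidef θ fun k => sub_nonneg.2 (hvw k))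

theorem trace_inv_fisherInfo_le {v w : ι → ℝ} (hvw : ∀ k, v k ≤ w k)
    (hv : (fisherInfo θ v).PosDef) : (fisherInfo θ w)⁻¹.trace ≤ (fisherInfo θ v)⁻¹.trace := by
  refine trace_inv_le_of_posSemidef_sub_fin_two hv ?_
  rw [fisherInfo_sub]
  exact fisherInfo_posSemidef θ fun k => sub_nonneg.2 (hvw k)

variable [LinearOrder ι]

theorem det_fisherInfo_const (c : ℝ) :
    (fisherInfo θ fun _ => c).det =
      c ^ 2 * ∑ j, ∑ k ∈ univ.filter (fun k => j < k), sin (θ j - θ k) ^ 2 := by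
  simp only [det_fisherInfo, mul_sum]
  ring_nf

theorem trace_inv_fisherInfo_const (ρ : ℝ) :
    (fisherInfo θ fun _ => (ρ ^ 2)⁻¹)⁻¹.trace =
      Fintype.card ι * ρ ^ 2 / ∑ j, ∑ k ∈ univ.filter (fun k => j < k), sin (θ j - θ k) ^ 2 := by
  rw [trace_inv_fin_two, trace_fisherInfo, det_fisherInfo_const, sum_const, card_univ,
    nsmul_eq_mul]
  rcases eq_or_ne ρ 0 with rfl | hρ
  · simp
  · field_simp

end fisherInfo

theorem SPEB_eq_trace_inv_fisherInfo (N : ℕ) (Ts : ℝ) (r θ : Fin N → ℝ) :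
    SPEB N Ts r θ = (fisherInfo θ fun k => (r k ^ 2)⁻¹)⁻¹.trace / Ts := by
  rw [trace_inv_fin_two, trace_fisherInfo, det_fisherInfo, div_div, mul_comm _ Ts]
  rfl

/-- equation (4.1) of the paper: the GDOP-based sandwich bound
`G(r_min,θ) ≤ S(r,θ) ≤ G(r_max,θ)`. -/
theorem stmt_15 (N : ℕ) (hN : 2 ≤ N) (Ts : ℝ) (hTs : 0 < Ts)
    (r θ : Fin N → ℝ) (hr : ∀ k, 0 < r k)
    (hpos : 0 < ∑ j, ∑ k ∈ Finset.univ.filter (fun k => j < k),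
      Real.sin (θ j - θ k) ^ 2)
    (rmin rmax : ℝ)
    (hmin : rmin = Finset.univ.inf' ⟨⟨0, by omega⟩, Finset.mem_univ _⟩ r)
    (hmax : rmax = Finset.univ.sup' ⟨⟨0, by omega⟩, Finset.mem_univ _⟩ r) :
    (N : ℝ) * rmin ^ 2 / (Ts * ∑ j, ∑ k ∈ Finset.univ.filter (fun k => j < k),
        Real.sin (θ j - θ k) ^ 2) ≤ SPEB N Ts r θ ∧
    SPEB N Ts r θ ≤ (N : ℝ) * rmax ^ 2 /
      (Ts * ∑ j, ∑ k ∈ Finset.univ.filter (fun k => j < k),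
        Real.sin (θ j - θ k) ^ 2) := by
  have hmin_le k : rmin ≤ r k := hmin ▸ inf'_le r (mem_univ k)
  have hle_max k : r k ≤ rmax := hmax ▸ le_sup' r (mem_univ k)
  have hrmin : 0 < rmin := hmin ▸ (lt_inf'_iff _).2 fun k _ => hr k
  have hrmax : 0 < rmax := (hr _).trans_le (hle_max ⟨0, by omega⟩)
  have hlo k : (rmax ^ 2)⁻¹ ≤ (r k ^ 2)⁻¹ :=
    inv_anti₀ (pow_pos (hr k) 2) (pow_le_pow_left₀ (hr k).le (hle_max k) 2)
  have hhi k : (r k ^ 2)⁻¹ ≤ (rmin ^ 2)⁻¹ :=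
    inv_anti₀ (pow_pos hrmin 2) (pow_le_pow_left₀ hrmin.le (hmin_le k) 2)
  have hpd_max : (fisherInfo θ fun _ => (rmax ^ 2)⁻¹).PosDef := by
    refine (fisherInfo_posSemidef θ fun _ => by positivity).posDef_iff_det_ne_zero.2 ?_
    rw [det_fisherInfo_const]
    exact mul_ne_zero (by positivity) hpos.ne'
  have hpd := fisherInfo_posDef_of_le θ hlo hpd_max
  have hGDOP (ρ : ℝ) : (N : ℝ) * ρ ^ 2 / ∑ j, ∑ k ∈ univ.filter (fun k => j < k),
      sin (θ j - θ k) ^ 2 = (fisherInfo θ fun _ => (ρ ^ 2)⁻¹)⁻¹.trace := by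
    rw [trace_inv_fisherInfo_const, Fintype.card_fin]
  rw [mul_comm Ts, ← div_div, ← div_div, SPEB_eq_trace_inv_fisherInfo, hGDOP, hGDOP]
  exact ⟨div_le_div_of_nonneg_right (trace_inv_fisherInfo_le θ hhi hpd) hTs.le,
    div_le_div_of_nonneg_right (trace_inv_fisherInfo_le θ hlo hpd_max) hTs.le⟩
end

section
/- Fix an integer N ≥ 3, reals 0 < d_min < d_max and a constant T_s > 0. (a) For all r_1, …, r_N ∈ [d_min, d_max] and all reals θ_1, …, θ_N such that Σ_{1≤j<k≤N} r_j^{-2} r_k^{-2} sin²(θ_j − θ_k) > 0, the SPEB satisfies S(r,θ) ≥ 4·d_min²/(N·T_s), where S(r,θ) = (Σ_{k=1}^N r_k^{-2}) / (T_s Σ_{1≤j<k≤N} r_j^{-2} r_k^{-2} sin²(θ_j − θ_k)). (b) This bound is attained: with r_k = d_min and θ_k = 2πk/N for k = 1, …, N (the anchors at the vertices of a regular N-gon inscribed in the circle of radius d_min), S(r,θ) = 4·d_min²/(N·T_s). -/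
/-!
With `a_k = r_k⁻²`, the identity `2 sin²(θ_j − θ_k) = 1 − cos 2θ_j cos 2θ_k − sin 2θ_j sin 2θ_k`
turns the denominator into a difference of squares:
`4 Σ_{j<k} a_j a_k sin²(θ_j − θ_k) = (Σ_k a_k)² − |Σ_k a_k e^{2iθ_k}|² ≤ (Σ_k a_k)²`.
Hence `S ≥ 4 / (T_s Σ_k a_k) ≥ 4 d_min² / (N T_s)`, since every `a_k ≤ d_min⁻²`.
For the regular `N`-gon of radius `d_min` the points `e^{2iθ_k}` are the powers `ζ^{2(k+1)}` of a
primitive `N`-th root of unity `ζ`, and `ζ² ≠ 1` as `N ≥ 3`; so their sum vanishes and both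
inequalities are equalities.
-/

open Finset Real

section PairSums

variable {ι : Type*} [Fintype ι] [LinearOrder ι]

theorem Finset.sum_sum_eq_two_nsmul_sum_filter_lt {M : Type*} [AddCommMonoid M]
    (f : ι → ι → M) (hsymm : ∀ j k, f j k = f k j) (hdiag : ∀ j, f j j = 0) :
    ∑ j, ∑ k, f j k = 2 • ∑ j, ∑ k ∈ univ.filter (fun k => j < k), f j k := by
  have hsplit : ∀ j k, f j k = (if j < k then f j k else 0) + (if k < j then f j k else 0) := by
    intro j k
    rcases lt_trichotomy j k with h | rfl | h
    · simp [h, h.not_gt]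
    · simp [hdiag]
    · simp [h, h.not_gt]
  have hswap : ∑ j, ∑ k, (if k < j then f j k else 0)
      = ∑ j, ∑ k, (if j < k then f j k else 0) := by
    rw [sum_comm]
    simp_rw [hsymm]
  simp_rw [sum_filter]
  rw [two_nsmul]
  conv_lhs => enter [2, j, 2, k]; rw [hsplit j k]
  simp only [sum_add_distrib, hswap]

theorem four_mul_sum_filter_lt_mul_sin_sq (a θ : ι → ℝ) :
    4 * ∑ j, ∑ k ∈ univ.filter (fun k => j < k), a j * a k * sin (θ j - θ k) ^ 2
      = (∑ k, a k) ^ 2 - ‖∑ k, (a k : ℂ) * Complex.exp (↑(2 * θ k) * Complex.I)‖ ^ 2 := by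
  set c : ι → ℝ := fun k => a k * cos (2 * θ k)
  set s : ι → ℝ := fun k => a k * sin (2 * θ k)
  have hterm : ∀ j k, 2 * (a j * a k * sin (θ j - θ k) ^ 2) = a j * a k - c j * c k - s j * s k := by
    intro j k
    rw [sin_sq_eq_half_sub, show 2 * (θ j - θ k) = 2 * θ j - 2 * θ k by ring, cos_sub]
    ring
  have hnorm : ‖∑ k, (a k : ℂ) * Complex.exp (↑(2 * θ k) * Complex.I)‖ ^ 2
      = (∑ k, c k) ^ 2 + (∑ k, s k) ^ 2 := by
    rw [Complex.sq_norm, Complex.normSq_apply, Complex.re_sum, Complex.im_sum]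
    simp only [Complex.re_ofReal_mul, Complex.im_ofReal_mul, Complex.exp_ofReal_mul_I_re,
      Complex.exp_ofReal_mul_I_im, c, s]
    ring
  have hsum := sum_sum_eq_two_nsmul_sum_filter_lt
    (fun j k => a j * a k * sin (θ j - θ k) ^ 2)
    (fun j k => by rw [← neg_sub, sin_neg, neg_sq, mul_comm (a j)]) (fun j => by simp)
  rw [two_nsmul, ← two_mul] at hsum
  rw [hnorm, show (4 : ℝ) = 2 * 2 by norm_num, mul_assoc, ← hsum, mul_sum]
  simp_rw [mul_sum, hterm, sum_sub_distrib, sq, sum_mul_sum]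
  ring

theorem four_mul_sum_filter_lt_mul_sin_sq_le (a θ : ι → ℝ) :
    4 * ∑ j, ∑ k ∈ univ.filter (fun k => j < k), a j * a k * sin (θ j - θ k) ^ 2
      ≤ (∑ k, a k) ^ 2 := by
  rw [four_mul_sum_filter_lt_mul_sin_sq]
  exact sub_le_self _ (sq_nonneg _)

theorem sum_inv_sq_pos_of_sum_filter_lt_pos {r θ : ι → ℝ}
    (hB : 0 < ∑ j, ∑ k ∈ univ.filter (fun k => j < k),
      ((r j) ^ 2)⁻¹ * ((r k) ^ 2)⁻¹ * sin (θ j - θ k) ^ 2) :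
    0 < ∑ k, ((r k) ^ 2)⁻¹ := by
  have hle := four_mul_sum_filter_lt_mul_sin_sq_le (fun k => ((r k) ^ 2)⁻¹) θ
  refine lt_of_le_of_ne (sum_nonneg fun k _ => by positivity) fun h => ?_
  rw [← h] at hle
  linarith

end PairSums

theorem four_div_le_SPEB {N : ℕ} {Ts : ℝ} (hTs : 0 < Ts) {r θ : Fin N → ℝ}
    (hB : 0 < ∑ j, ∑ k ∈ univ.filter (fun k => j < k),
      ((r j) ^ 2)⁻¹ * ((r k) ^ 2)⁻¹ * sin (θ j - θ k) ^ 2) :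
    4 / (Ts * ∑ k, ((r k) ^ 2)⁻¹) ≤ SPEB N Ts r θ := by
  have hle := four_mul_sum_filter_lt_mul_sin_sq_le (fun k => ((r k) ^ 2)⁻¹) θ
  have hA := sum_inv_sq_pos_of_sum_filter_lt_pos hB
  rw [SPEB, div_le_div_iff₀ (by positivity) (by positivity)]
  nlinarith [mul_le_mul_of_nonneg_left hle hTs.le]

theorem sum_inv_sq_le {N : ℕ} {d : ℝ} (hd : 0 < d) {r : Fin N → ℝ} (hr : ∀ k, d ≤ r k) :
    ∑ k, ((r k) ^ 2)⁻¹ ≤ N / d ^ 2 := by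
  calc ∑ k, ((r k) ^ 2)⁻¹ ≤ ∑ _k : Fin N, (d ^ 2)⁻¹ :=
        sum_le_sum fun k _ => inv_anti₀ (by positivity) (pow_le_pow_left₀ hd.le (hr k) 2)
    _ = N / d ^ 2 := by simp [div_eq_mul_inv]

theorem sum_exp_regular_polygon_eq_zero {N : ℕ} (hN : 3 ≤ N) :
    ∑ k : Fin N, Complex.exp (↑(2 * (2 * π * ((k : ℕ) + 1) / N)) * Complex.I) = 0 := by
  set ζ := Complex.exp (2 * π * Complex.I / N)
  have hζ : IsPrimitiveRoot ζ N := Complex.isPrimitiveRoot_exp N (by omega)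
  have hpow : ∀ k : Fin N, Complex.exp (↑(2 * (2 * π * ((k : ℕ) + 1) / N)) * Complex.I)
      = ζ ^ 2 * (ζ ^ 2) ^ (k : ℕ) := by
    intro k
    rw [← pow_mul, ← pow_add, ← Complex.exp_nat_mul]
    push_cast
    ring_nf
  have hz1 : ζ ^ 2 ≠ 1 := hζ.pow_ne_one_of_pos_of_lt two_ne_zero (by omega)
  have hzN : (ζ ^ 2) ^ N = 1 := by rw [← pow_mul, mul_comm, pow_mul, hζ.pow_eq_one, one_pow]
  simp_rw [hpow]
  rw [← mul_sum, Fin.sum_univ_eq_sum_range (fun k => (ζ ^ 2) ^ k), geom_sum_eq hz1, hzN,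
    sub_self, zero_div, mul_zero]

theorem SPEB_regular_polygon {N : ℕ} (hN : 3 ≤ N) (Ts d : ℝ) :
    SPEB N Ts (fun _ => d) (fun k => 2 * π * ((k : ℕ) + 1) / N) = 4 * d ^ 2 / (N * Ts) := by
  have h4B := four_mul_sum_filter_lt_mul_sin_sq (fun _ : Fin N => (d ^ 2)⁻¹)
    (fun k => 2 * π * ((k : ℕ) + 1) / N)
  rw [← mul_sum, sum_exp_regular_polygon_eq_zero hN] at h4B
  simp only [mul_zero, norm_zero, sum_const, card_univ, Fintype.card_fin, nsmul_eq_mul] at h4B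
  rw [mul_comm, ← eq_div_iff four_ne_zero] at h4B
  rw [SPEB, h4B]
  simp only [sum_const, card_univ, Fintype.card_fin, nsmul_eq_mul]
  rcases eq_or_ne d 0 with rfl | hd
  · simp
  field_simp
  ring

theorem stmt_19_general (N : ℕ) (hN : 3 ≤ N) (dmin dmax : ℝ) (h0 : 0 < dmin)
    (Ts : ℝ) (hTs : 0 < Ts) :
    (∀ r θ : Fin N → ℝ, (∀ k, r k ∈ Set.Icc dmin dmax) →
      0 < ∑ j, ∑ k ∈ Finset.univ.filter (fun k => j < k),
        ((r j) ^ 2)⁻¹ * ((r k) ^ 2)⁻¹ * Real.sin (θ j - θ k) ^ 2 →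
      4 * dmin ^ 2 / (N * Ts) ≤ SPEB N Ts r θ) ∧
    SPEB N Ts (fun _ => dmin) (fun k => 2 * π * ((k : ℕ) + 1) / N)
      = 4 * dmin ^ 2 / (N * Ts) := by
  refine ⟨fun r θ hr hB => ?_, SPEB_regular_polygon hN Ts dmin⟩
  have hA := sum_inv_sq_pos_of_sum_filter_lt_pos hB
  calc 4 * dmin ^ 2 / (N * Ts) = 4 / (Ts * (N / dmin ^ 2)) := by field_simp
    _ ≤ 4 / (Ts * ∑ k, ((r k) ^ 2)⁻¹) := by
      gcongr
      exact sum_inv_sq_le h0 fun k => (hr k).1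
    _ ≤ SPEB N Ts r θ := four_div_le_SPEB hTs hB

/-- Remark 2 of the paper: (a) for anchors with distances in
`[d_min, d_max]`, the SPEB is at least `4 d_min²/(N T_s)`; (b) this bound is
attained by the regular `N`-gon of radius `d_min` (θ_k = 2πk/N, k = 1,…,N). -/
theorem stmt_19 (N : ℕ) (hN : 3 ≤ N) (dmin dmax : ℝ) (h0 : 0 < dmin)
    (hd : dmin < dmax) (Ts : ℝ) (hTs : 0 < Ts) :
    (∀ r θ : Fin N → ℝ, (∀ k, r k ∈ Set.Icc dmin dmax) →
      0 < ∑ j, ∑ k ∈ Finset.univ.filter (fun k => j < k),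
        ((r j) ^ 2)⁻¹ * ((r k) ^ 2)⁻¹ * Real.sin (θ j - θ k) ^ 2 →
      4 * dmin ^ 2 / (N * Ts) ≤ SPEB N Ts r θ) ∧
    SPEB N Ts (fun _ => dmin) (fun k => 2 * π * ((k : ℕ) + 1) / N)
      = 4 * dmin ^ 2 / (N * Ts) :=
  stmt_19_general N hN dmin dmax h0 Ts hTs
end
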